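/- For every 3-CNF formula φ with n variables and m clauses (each clause having three literals over distinct variables and no clause containing a variable together with its negation), the PFA A_φ is carefully synchronizing if and only if there exists a word w ∈ {a,b}* of length n such that δ_φ(S_init, w) is defined and equals S_end. -/

import Mathlib

namespace PaperSync

variable {Q A : Type*}

/-- The extension of a partial transition function `δ : Q → A → Option Q` to words. -/
def wordMap (δ : Q → A → Option Q) : Q → List A → Option Q
  | q, [] => some q
  | q, x :: w => (δ q x).bind fun q' => wordMap δ q' w

/-- A word `w` carefully synchronizes the PFA `δ`:
`δ(q, w)` is defined for every state and all values agree. -/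
def CarefullySync (δ : Q → A → Option Q) (w : List A) : Prop :=
  ∃ qbar : Q, ∀ q : Q, wordMap δ q w = some qbar

open Classical in
/-- The image of a set of states under a word: defined iff `δ(q,w)` is defined
for all `q ∈ S`, in which case it is `{δ(q,w) : q ∈ S}`. -/
noncomputable def setImage (δ : Q → A → Option Q) (S : Set Q) (w : List A) :
    Option (Set Q) :=
  if ∀ q ∈ S, (wordMap δ q w).isSome then
    some {q' | ∃ q ∈ S, wordMap δ q w = some q'}
  else none

/-- A PFA is one-cluster with respect to a letter `a`: `a` is defined at every
state and the functional digraph `G_a` of `a` has exactly one weakly connected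
component. -/
def OneCluster (δ : Q → A → Option Q) (a : A) : Prop :=
  (∀ q : Q, (δ q a).isSome) ∧
  ∀ p q : Q, Relation.EqvGen (fun u v => δ u a = some v) p q

/-- The vertex set of the `a`-cycle: states returning to themselves under some
positive power of `a`. -/
def cycleSet (δ : Q → A → Option Q) (a : A) : Set Q :=
  {q | ∃ k : ℕ, 1 ≤ k ∧ wordMap δ q (List.replicate k a) = some q}

/-- The level of a state: the least `k` with `δ(q, a^k)` on the `a`-cycle. -/
noncomputable def levelOf (δ : Q → A → Option Q) (a : A) (q : Q) : ℕ :=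
  sInf {k | ∃ p ∈ cycleSet δ a, wordMap δ q (List.replicate k a) = some p}

/-- The level of `G_a`: the maximal level of a state. -/
noncomputable def levelG [Fintype Q] (δ : Q → A → Option Q) (a : A) : ℕ :=
  Finset.univ.sup (levelOf δ a)

/-- The binary alphabet `{a, b}` of `A_φ`. -/
inductive AB | a | b
deriving DecidableEq

instance : Fintype AB := ⟨{AB.a, AB.b}, fun x => by cases x <;> simp⟩

/-- The states of `A_φ` for a 3-CNF formula with `n` variables and `m`
clauses: `p i` is `p_{i+1}`, `r i` is `r_{i+1}`, `ct i j` is `c_{i+1}^{x_{j+1}}`,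
`cf i j` is `c̄_{i+1}^{x_{j+1}}`, `ctend i` is `c_{i+1}^{end}`, and `cfend i` is
`c̄_{i+1}^{end}`. -/
inductive StQ (n m : ℕ)
  | p (i : Fin m)
  | r (i : Fin m)
  | ct (i : Fin m) (j : Fin n)
  | cf (i : Fin m) (j : Fin n)
  | ctend (i : Fin m)
  | cfend (i : Fin m)
deriving DecidableEq, Fintype

/-- The transition function of `A_φ`, where the formula `φ` is given by its
clauses `Cl i ⊆ Fin n × Bool` (a literal `(j, tt)` is `x_{j+1}`, a literal
`(j, ff)` is `¬x_{j+1}`). -/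
def dphi (n m : ℕ) (hn : 0 < n) (Cl : Fin m → Finset (Fin n × Bool)) :
    StQ n m → AB → Option (StQ n m)
  | .p i, .a => some (.p ⟨(i.val + 1) % m, Nat.mod_lt _ i.pos⟩)
  | .p i, .b => some (.cf i ⟨0, hn⟩)
  | .r i, .a => some (.p i)
  | .r _, .b => none
  | .ctend i, .a => some (.r i)
  | .ctend i, .b => some (.p ⟨0, i.pos⟩)
  | .cfend i, .a => some (.r i)
  | .cfend _, .b => none
  | .ct i j, _ =>
      some (if h : j.val + 1 < n then .ct i ⟨j.val + 1, h⟩ else .ctend i)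
  | .cf i j, .a =>
      some (if h : j.val + 1 < n then
          (if (j, true) ∈ Cl i then .ct i ⟨j.val + 1, h⟩ else .cf i ⟨j.val + 1, h⟩)
        else (if (j, true) ∈ Cl i then .ctend i else .cfend i))
  | .cf i j, .b =>
      some (if h : j.val + 1 < n then
          (if (j, false) ∈ Cl i then .ct i ⟨j.val + 1, h⟩ else .cf i ⟨j.val + 1, h⟩)
        else (if (j, false) ∈ Cl i then .ctend i else .cfend i))

/-- Every clause consists of exactly three literals over pairwise distinct
variables (in particular no clause contains both a variable and its
negation). -/
def GoodClauses (n m : ℕ) (Cl : Fin m → Finset (Fin n × Bool)) : Prop :=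
  ∀ i : Fin m, (Cl i).card = 3 ∧ ((Cl i).image Prod.fst).card = 3

/-- The set `S_init = {c̄_1^{x_1}, …, c̄_m^{x_1}}`. -/
def Sinit (n m : ℕ) (hn : 0 < n) : Set (StQ n m) :=
  Set.range fun i : Fin m => StQ.cf i ⟨0, hn⟩

/-- The set `S_end = {c_1^{end}, …, c_m^{end}}`. -/
def Send (n m : ℕ) : Set (StQ n m) :=
  Set.range StQ.ctend

/-! ### Auxiliary material -/

theorem wordMap_append (δ : Q → A → Option Q) (q : Q) (u v : List A) :
    wordMap δ q (u ++ v) = (wordMap δ q u).bind fun q' => wordMap δ q' v := by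
  induction u generalizing q with
  | nil => simp [wordMap]
  | cons x u ih =>
    simp only [List.cons_append, wordMap]
    cases δ q x with
    | none => rfl
    | some q' => simp [ih]

def litOf : AB → Bool
  | .a => true
  | .b => false

/-- Clause `i` is "hit" by word `w` starting at level `t0`. -/
def hits {n m : ℕ} (Cl : Fin m → Finset (Fin n × Bool)) (i : Fin m) (t0 : ℕ)
    (w : List AB) : Prop :=
  ∃ j : Fin n, t0 ≤ j.val ∧ j.val - t0 < w.length ∧
    (j, litOf (w.getD (j.val - t0) AB.a)) ∈ Cl i

instance {n m : ℕ} (Cl : Fin m → Finset (Fin n × Bool)) (i : Fin m) (t0 : ℕ)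
    (w : List AB) : Decidable (hits Cl i t0 w) := by
  unfold hits; infer_instance

theorem hits_cons {n m : ℕ} (Cl : Fin m → Finset (Fin n × Bool)) (i : Fin m)
    (t0 : ℕ) (ht : t0 < n) (x : AB) (w : List AB) :
    hits Cl i t0 (x :: w) ↔
      ((⟨t0, ht⟩ : Fin n), litOf x) ∈ Cl i ∨ hits Cl i (t0 + 1) w := by
  constructor
  · rintro ⟨j, h1, h2, h3⟩
    rcases Nat.eq_or_lt_of_le h1 with h | h
    · left
      have hj : j = ⟨t0, ht⟩ := Fin.ext h.symm
      subst hj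
      simpa [Nat.sub_self] using h3
    · right
      obtain ⟨k, hk⟩ : ∃ k, j.val - t0 = k + 1 := ⟨j.val - t0 - 1, by omega⟩
      refine ⟨j, by omega, by simp at h2; omega, ?_⟩
      have : j.val - (t0 + 1) = k := by omega
      rw [this]
      rwa [hk, List.getD_cons_succ] at h3
  · rintro (h | ⟨j, h1, h2, h3⟩)
    · exact ⟨⟨t0, ht⟩, le_refl _, by simp, by simpa [Nat.sub_self] using h⟩
    · refine ⟨j, by omega, by simp; omega, ?_⟩
      have : j.val - t0 = (j.val - (t0 + 1)) + 1 := by omega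
      rw [this, List.getD_cons_succ]
      exact h3

section Aphi

variable {n m : ℕ} (hn : 0 < n) (Cl : Fin m → Finset (Fin n × Bool))

theorem wm_ct (i : Fin m) :
    ∀ (w : List AB) (t0 : ℕ) (ht : t0 < n), t0 + w.length ≤ n →
      wordMap (dphi n m hn Cl) (.ct i ⟨t0, ht⟩) w =
        some (if h : t0 + w.length < n then .ct i ⟨t0 + w.length, h⟩
          else .ctend i) := by
  intro w
  induction w with
  | nil => intro t0 ht _; simp [wordMap, ht]
  | cons x w ih =>
    intro t0 ht hl
    simp only [List.length_cons] at hl ⊢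
    have step : dphi n m hn Cl (.ct i ⟨t0, ht⟩) x =
        some (if h : t0 + 1 < n then .ct i ⟨t0 + 1, h⟩ else .ctend i) := by
      cases x <;> rfl
    by_cases h1 : t0 + 1 < n
    · rw [show (wordMap (dphi n m hn Cl) (.ct i ⟨t0, ht⟩) (x :: w)) =
          (dphi n m hn Cl (.ct i ⟨t0, ht⟩) x).bind
            (fun q' => wordMap (dphi n m hn Cl) q' w) from rfl,
        step, dif_pos h1]
      simp only [Option.bind_some]
      rw [ih (t0 + 1) h1 (by omega)]
      have e : t0 + 1 + w.length = t0 + (w.length + 1) := by omega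
      rw [e]
    · have hw0 : w = [] := by
        cases w with
        | nil => rfl
        | cons y w' => exfalso; simp at hl; omega
      subst hw0
      rw [show (wordMap (dphi n m hn Cl) (.ct i ⟨t0, ht⟩) [x]) =
          (dphi n m hn Cl (.ct i ⟨t0, ht⟩) x).bind
            (fun q' => wordMap (dphi n m hn Cl) q' []) from rfl,
        step, dif_neg h1]
      simp [wordMap, h1]


theorem cf_step (i : Fin m) (t0 : ℕ) (ht : t0 < n) (x : AB) :
    dphi n m hn Cl (.cf i ⟨t0, ht⟩) x =
      some (if h : t0 + 1 < n then
          (if ((⟨t0, ht⟩ : Fin n), litOf x) ∈ Cl i then .ct i ⟨t0 + 1, h⟩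
            else .cf i ⟨t0 + 1, h⟩)
        else (if ((⟨t0, ht⟩ : Fin n), litOf x) ∈ Cl i then .ctend i
            else .cfend i)) := by
  cases x <;> rfl

/-- The gadget index of a chain state. -/
def inChain {n m : ℕ} : StQ n m → Option (Fin m)
  | .ct i _ => some i
  | .cf i _ => some i
  | .ctend i => some i
  | .cfend i => some i
  | _ => none

theorem wm_cf_chain (i : Fin m) :
    ∀ (w : List AB) (t0 : ℕ) (ht : t0 < n), t0 + w.length ≤ n →
      ∃ q', wordMap (dphi n m hn Cl) (.cf i ⟨t0, ht⟩) w = some q' ∧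
        inChain q' = some i := by
  intro w
  induction w with
  | nil => intro t0 ht _; exact ⟨_, rfl, rfl⟩
  | cons x w ih =>
    intro t0 ht hl
    simp only [List.length_cons] at hl
    have hcons : wordMap (dphi n m hn Cl) (.cf i ⟨t0, ht⟩) (x :: w) =
        (dphi n m hn Cl (.cf i ⟨t0, ht⟩) x).bind
          (fun q' => wordMap (dphi n m hn Cl) q' w) := rfl
    rw [hcons, cf_step hn Cl i t0 ht x]
    by_cases h1 : t0 + 1 < n
    · rw [dif_pos h1]
      by_cases hmem : ((⟨t0, ht⟩ : Fin n), litOf x) ∈ Cl i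
      · rw [if_pos hmem]
        simp only [Option.bind_some]
        refine ⟨_, wm_ct hn Cl i w (t0 + 1) h1 (by omega), ?_⟩
        split <;> rfl
      · rw [if_neg hmem]
        simp only [Option.bind_some]
        exact ih (t0 + 1) h1 (by omega)
    · have hw0 : w = [] := by
        cases w with
        | nil => rfl
        | cons y w' => exfalso; simp at hl; omega
      subst hw0
      rw [dif_neg h1]
      by_cases hmem : ((⟨t0, ht⟩ : Fin n), litOf x) ∈ Cl i
      · rw [if_pos hmem]; exact ⟨_, rfl, rfl⟩
      · rw [if_neg hmem]; exact ⟨_, rfl, rfl⟩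

theorem wm_cf_full (i : Fin m) :
    ∀ (w : List AB) (t0 : ℕ) (ht : t0 < n), t0 + w.length = n →
      wordMap (dphi n m hn Cl) (.cf i ⟨t0, ht⟩) w =
        some (if hits Cl i t0 w then .ctend i else .cfend i) := by
  intro w
  induction w with
  | nil => intro t0 ht h; simp at h; omega
  | cons x w ih =>
    intro t0 ht hl
    simp only [List.length_cons] at hl
    have hcons : wordMap (dphi n m hn Cl) (.cf i ⟨t0, ht⟩) (x :: w) =
        (dphi n m hn Cl (.cf i ⟨t0, ht⟩) x).bind
          (fun q' => wordMap (dphi n m hn Cl) q' w) := rfl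
    rw [hcons, cf_step hn Cl i t0 ht x]
    simp only [hits_cons Cl i t0 ht x w]
    by_cases h1 : t0 + 1 < n
    · rw [dif_pos h1]
      by_cases hmem : ((⟨t0, ht⟩ : Fin n), litOf x) ∈ Cl i
      · rw [if_pos hmem]
        simp only [Option.bind_some]
        rw [wm_ct hn Cl i w (t0 + 1) h1 (by omega), dif_neg (by omega)]
        simp [hmem]
      · rw [if_neg hmem]
        simp only [Option.bind_some]
        rw [ih (t0 + 1) h1 (by omega)]
        simp [hmem]
    · have hw0 : w = [] := by
        cases w with
        | nil => rfl
        | cons y w' => exfalso; simp at hl; omega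
      subst hw0
      rw [dif_neg h1]
      have hnil : ¬ hits Cl i (t0 + 1) [] := by
        rintro ⟨j, _, h2, _⟩; simp at h2
      by_cases hmem : ((⟨t0, ht⟩ : Fin n), litOf x) ∈ Cl i
      · rw [if_pos hmem]; simp [hmem, wordMap]
      · rw [if_neg hmem]; simp [hmem, hnil, wordMap]


/-- Distance to the `p`-cycle along `a`. -/
def dist (n : ℕ) {m : ℕ} : StQ n m → ℕ
  | .p _ => 0
  | .r _ => 1
  | .ctend _ => 2
  | .cfend _ => 2
  | .ct _ j => n - j.val + 2
  | .cf _ j => n - j.val + 2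

theorem dist_le (q : StQ n m) : dist n q ≤ n + 2 := by
  cases q <;> simp [dist]

theorem reachP :
    ∀ (k : ℕ) (q : StQ n m), dist n q ≤ k →
      ∃ i, wordMap (dphi n m hn Cl) q (List.replicate k .a) = some (.p i) := by
  intro k
  induction k with
  | zero =>
    intro q hq
    cases q with
    | p i => exact ⟨i, rfl⟩
    | r i => simp [dist] at hq
    | ct i j => simp [dist] at hq
    | cf i j => simp [dist] at hq
    | ctend i => simp [dist] at hq
    | cfend i => simp [dist] at hq
  | succ k ih =>
    intro q hq
    rw [show List.replicate (k + 1) AB.a = .a :: List.replicate k .a from rfl]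
    cases q with
    | p i => exact ih (.p ⟨(i.val + 1) % m, Nat.mod_lt _ i.pos⟩) (by simp [dist])
    | r i => exact ih (.p i) (by simp [dist])
    | ctend i => exact ih (.r i) (by simp [dist]; simp [dist] at hq; omega)
    | cfend i => exact ih (.r i) (by simp [dist]; simp [dist] at hq; omega)
    | ct i j =>
      obtain ⟨jv, hjv⟩ := j
      simp [dist] at hq
      have hst : wordMap (dphi n m hn Cl) (.ct i ⟨jv, hjv⟩) (.a :: List.replicate k .a) =
          wordMap (dphi n m hn Cl)
            (if h : jv + 1 < n then .ct i ⟨jv + 1, h⟩ else .ctend i)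
            (List.replicate k .a) := rfl
      rw [hst]
      by_cases h1 : jv + 1 < n
      · rw [dif_pos h1]
        exact ih _ (by simp [dist]; omega)
      · rw [dif_neg h1]
        exact ih _ (by simp [dist]; omega)
    | cf i j =>
      obtain ⟨jv, hjv⟩ := j
      simp [dist] at hq
      have hst : wordMap (dphi n m hn Cl) (.cf i ⟨jv, hjv⟩) (.a :: List.replicate k .a) =
          wordMap (dphi n m hn Cl)
            (if h : jv + 1 < n then
              (if ((⟨jv, hjv⟩ : Fin n), true) ∈ Cl i then .ct i ⟨jv + 1, h⟩
                else .cf i ⟨jv + 1, h⟩)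
            else (if ((⟨jv, hjv⟩ : Fin n), true) ∈ Cl i then .ctend i else .cfend i))
            (List.replicate k .a) := rfl
      rw [hst]
      by_cases h1 : jv + 1 < n
      · rw [dif_pos h1]
        by_cases hmem : ((⟨jv, hjv⟩ : Fin n), true) ∈ Cl i
        · rw [if_pos hmem]; exact ih _ (by simp [dist]; omega)
        · rw [if_neg hmem]; exact ih _ (by simp [dist]; omega)
      · rw [dif_neg h1]
        by_cases hmem : ((⟨jv, hjv⟩ : Fin n), true) ∈ Cl i
        · rw [if_pos hmem]; exact ih _ (by simp [dist]; omega)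
        · rw [if_neg hmem]; exact ih _ (by simp [dist]; omega)

theorem SI (w : List AB) (hw : w.length = n) :
    setImage (dphi n m hn Cl) (Sinit n m hn) w = some (Send n m) ↔
      ∀ i, hits Cl i 0 w := by
  have tokL : ∀ i : Fin m, wordMap (dphi n m hn Cl) (.cf i ⟨0, hn⟩) w =
      some (if hits Cl i 0 w then .ctend i else .cfend i) :=
    fun i => wm_cf_full hn Cl i w 0 hn (by omega)
  have hC : ∀ q ∈ Sinit n m hn, (wordMap (dphi n m hn Cl) q w).isSome := by
    rintro q ⟨i, rfl⟩
    rw [tokL i]; rfl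
  unfold setImage
  rw [if_pos hC, Option.some_inj]
  constructor
  · intro h i
    by_contra hh
    have hmem : (StQ.cfend i : StQ n m) ∈ Send n m := by
      rw [← h]
      exact ⟨.cf i ⟨0, hn⟩, ⟨i, rfl⟩, by rw [tokL i, if_neg hh]⟩
    obtain ⟨jj, hj⟩ := hmem
    simp at hj
  · intro h
    ext q'
    simp only [Set.mem_setOf_eq]
    constructor
    · rintro ⟨q, ⟨i, rfl⟩, hq⟩
      rw [tokL i, if_pos (h i)] at hq
      exact ⟨i, Option.some.inj hq⟩
    · rintro ⟨i, rfl⟩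
      exact ⟨.cf i ⟨0, hn⟩, ⟨i, rfl⟩, by rw [tokL i, if_pos (h i)]⟩

theorem main (hm2 : 2 ≤ m)
    (Hun : ∀ w : List AB, w.length = n → ∃ i, ¬ hits Cl i 0 w) :
    ∀ (N : ℕ) (v : List AB) (qb : StQ n m), v.length ≤ N →
      (∀ i : Fin m, wordMap (dphi n m hn Cl) (.p i) v = some qb) → False := by
  have hsur : ∀ k : Fin m, ∃ i : Fin m,
      (⟨(i.val + 1) % m, Nat.mod_lt _ i.pos⟩ : Fin m) = k := by
    intro k
    rcases Nat.eq_zero_or_pos k.val with h0 | h0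
    · refine ⟨⟨m - 1, by omega⟩, ?_⟩
      apply Fin.ext
      show (m - 1 + 1) % m = k.val
      rw [show m - 1 + 1 = m by omega, Nat.mod_self]
      omega
    · refine ⟨⟨k.val - 1, by omega⟩, ?_⟩
      apply Fin.ext
      show (k.val - 1 + 1) % m = k.val
      rw [show k.val - 1 + 1 = k.val by omega, Nat.mod_eq_of_lt k.isLt]
  intro N
  induction N with
  | zero =>
    intro v qb hlen h
    have hv : v = [] := List.eq_nil_of_length_eq_zero (by omega)
    subst hv
    have h0 := h ⟨0, by omega⟩
    have h1 := h ⟨1, by omega⟩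
    simp [wordMap] at h0 h1
    rw [← h0] at h1
    simp at h1
  | succ N ih =>
    intro v qb hlen h
    rcases v with _ | ⟨x, v'⟩
    · have h0 := h ⟨0, by omega⟩
      have h1 := h ⟨1, by omega⟩
      simp [wordMap] at h0 h1
      rw [← h0] at h1
      simp at h1
    cases x with
    | a =>
      refine ih v' qb (by simp at hlen; omega) ?_
      intro k
      obtain ⟨i, hi⟩ := hsur k
      have hh := h i
      rw [show wordMap (dphi n m hn Cl) (.p i) (.a :: v') =
          wordMap (dphi n m hn Cl) (.p ⟨(i.val + 1) % m, Nat.mod_lt _ i.pos⟩) v'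
          from rfl, hi] at hh
      exact hh
    | b =>
      have h' : ∀ i : Fin m,
          wordMap (dphi n m hn Cl) (.cf i ⟨0, hn⟩) v' = some qb := fun i => h i
      by_cases hsmall : v'.length < n
      · obtain ⟨q0, hq0, hc0⟩ := wm_cf_chain hn Cl ⟨0, by omega⟩ v' 0 hn (by omega)
        obtain ⟨q1, hq1, hc1⟩ := wm_cf_chain hn Cl ⟨1, hm2⟩ v' 0 hn (by omega)
        have e0 : qb = q0 := Option.some.inj ((h' ⟨0, by omega⟩).symm.trans hq0)
        have e1 : qb = q1 := Option.some.inj ((h' ⟨1, hm2⟩).symm.trans hq1)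
        rw [← e0] at hc0
        rw [← e1] at hc1
        rw [hc0] at hc1
        simp at hc1
      · push_neg at hsmall
        obtain ⟨w, rest, hsplit, hwn⟩ : ∃ w rest, v' = w ++ rest ∧ w.length = n :=
          ⟨v'.take n, v'.drop n, (List.take_append_drop n v').symm,
            by rw [List.length_take]; omega⟩
        subst hsplit
        have h'' : ∀ i : Fin m, wordMap (dphi n m hn Cl)
            (if hits Cl i 0 w then (.ctend i : StQ n m) else .cfend i) rest =
              some qb := by
          intro i
          have hh := h' i
          rw [wordMap_append, wm_cf_full hn Cl i w 0 hn (by omega)] at hh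
          simpa using hh
        obtain ⟨i0, hi0⟩ := Hun w hwn
        rcases rest with _ | ⟨x, rest'⟩
        · have e0 := h'' i0
          rw [if_neg hi0] at e0
          simp [wordMap] at e0
          set i1 : Fin m := if i0.val = 0 then ⟨1, hm2⟩ else ⟨0, by omega⟩ with hi1def
          have hne : i1 ≠ i0 := by
            rw [hi1def]
            split_ifs with hcase
            · intro hcontra; rw [← hcontra] at hcase; simp at hcase
            · intro hcontra; rw [← hcontra] at hcase; simp at hcase
          have e1 := h'' i1
          simp [wordMap] at e1
          rw [← e0] at e1
          split_ifs at e1 <;> simp at e1 <;> exact hne e1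
        · cases x with
          | b =>
            have e0 := h'' i0
            rw [if_neg hi0] at e0
            simp [wordMap, dphi] at e0
          | a =>
            have hr : ∀ i : Fin m,
                wordMap (dphi n m hn Cl) (.r i) rest' = some qb := by
              intro i
              have hh := h'' i
              by_cases hhit : hits Cl i 0 w
              · rw [if_pos hhit] at hh; exact hh
              · rw [if_neg hhit] at hh; exact hh
            rcases rest' with _ | ⟨y, rest''⟩
            · have e0 := hr ⟨0, by omega⟩
              have e1 := hr ⟨1, hm2⟩
              simp [wordMap] at e0 e1
              rw [← e0] at e1
              simp at e1
            · cases y with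
              | b =>
                have e0 := hr ⟨0, by omega⟩
                simp [wordMap, dphi] at e0
              | a =>
                refine ih rest'' qb ?_ (fun i => hr i)
                simp at hlen
                omega

end Aphi

/-- `A_φ` is carefully synchronizing iff there is a word
`w ∈ {a,b}*` of length `n` with `δ_φ(S_init, w)` defined and equal to
`S_end`. -/
theorem Aphi_sync_iff_word (n m : ℕ) (hn : 0 < n) (hm : 0 < m)
    (Cl : Fin m → Finset (Fin n × Bool)) (hCl : GoodClauses n m Cl) :
    (∃ w : List AB, CarefullySync (dphi n m hn Cl) w) ↔
    (∃ w : List AB, w.length = n ∧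
      setImage (dphi n m hn Cl) (Sinit n m hn) w = some (Send n m)) := by
  constructor
  · rintro ⟨v, qb, hv⟩
    by_contra hno
    have Hun : ∀ w : List AB, w.length = n → ∃ i, ¬ hits Cl i 0 w := by
      intro w hw
      by_contra hh
      push_neg at hh
      exact hno ⟨w, hw, (SI hn Cl w hw).mpr hh⟩
    have hm2 : 2 ≤ m := by
      by_contra h2
      push_neg at h2
      obtain ⟨⟨j, s⟩, hl⟩ := Finset.card_pos.mp
        (show 0 < (Cl ⟨0, hm⟩).card by rw [(hCl ⟨0, hm⟩).1]; omega)
      set w : List AB :=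
        List.ofFn (fun t : Fin n => if t = j then (if s then AB.a else AB.b)
          else AB.a) with hwdef
      have hwlen : w.length = n := by simp [hwdef]
      obtain ⟨i, hi⟩ := Hun w hwlen
      have hi0 : i = ⟨0, hm⟩ := by
        apply Fin.ext
        have := i.isLt
        omega
      subst hi0
      apply hi
      refine ⟨j, Nat.zero_le _, by simpa [hwlen] using j.isLt, ?_⟩
      have hget : w.getD (j.val - 0) AB.a = (if s then AB.a else AB.b) := by
        rw [Nat.sub_zero, List.getD_eq_getElem w AB.a (by omega)]
        simp [hwdef]
      rw [hget]
      cases s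
      · simpa [litOf] using hl
      · simpa [litOf] using hl
    exact main hn Cl hm2 Hun v.length v qb le_rfl (fun i => hv (.p i))
  · rintro ⟨w, hwlen, hw⟩
    have hhits : ∀ i, hits Cl i 0 w := (SI hn Cl w hwlen).mp hw
    refine ⟨List.replicate (n + 2) .a ++ .b :: (w ++ [.b]), .p ⟨0, hm⟩, fun q => ?_⟩
    rw [wordMap_append]
    obtain ⟨i, hi⟩ := reachP hn Cl (n + 2) q (dist_le q)
    rw [hi]
    simp only [Option.bind_some]
    rw [show wordMap (dphi n m hn Cl) (.p i) (.b :: (w ++ [.b])) =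
        wordMap (dphi n m hn Cl) (.cf i ⟨0, hn⟩) (w ++ [.b]) from rfl,
      wordMap_append, wm_cf_full hn Cl i w 0 hn (by omega), if_pos (hhits i)]
    simp only [Option.bind_some]
    rfl

end PaperSync
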